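/- Let X be a pre-Riesz space and let P and Q be band projections on X. Then P + Q − PQ is a band projection, and its range equals the vector space sum PX + QX. In particular, the sum of two projection bands in X is again a projection band. -/

import Mathlib

open Pointwise

variable {X : Type*} [AddCommGroup X] [PartialOrder X] [IsOrderedAddMonoid X] [Module ℝ X]
  [PosSMulStrictMono ℝ X]

/-- Two elements of an ordered vector space are disjoint if the sets `{x+y, -x-y}` and
`{x-y, y-x}` have the same set of upper bounds. -/
def UDisjoint (x y : X) : Prop :=
  upperBounds ({x + y, -x - y} : Set X) = upperBounds ({x - y, y - x} : Set X)

/-- The disjoint complement `S^⊥` of a set `S`. -/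
def dComp (S : Set X) : Set X := {x : X | ∀ s ∈ S, UDisjoint x s}

/-- A band: a set equal to its double disjoint complement. -/
def IsBand (B : Set X) : Prop := B = dComp (dComp B)

/-- A projection band: a band `B` with `B ∩ B^⊥ = {0}` and `B + B^⊥ = X`. -/
def IsProjBand (B : Set X) : Prop :=
  IsBand B ∧ B ∩ dComp B = {0} ∧ ∀ x : X, ∃ b ∈ B, ∃ c ∈ dComp B, x = b + c

/-- A positive linear operator. -/
def IsPosMap (T : X →ₗ[ℝ] X) : Prop := ∀ x : X, 0 ≤ x → 0 ≤ T x

/-- A band projection: a linear projection whose range is a projection band and whose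
kernel is the disjoint complement of the range. -/
def IsBandProj (P : X →ₗ[ℝ] X) : Prop :=
  P ∘ₗ P = P ∧ IsProjBand (Set.range ⇑P) ∧ (LinearMap.ker P : Set X) = dComp (Set.range ⇑P)

/-- A pre-Riesz space: for every nonempty finite `A ⊆ X` and every `x`, if the upper bounds
of `x + A` are contained in the upper bounds of `A`, then `x ≥ 0`. -/
def IsPreRiesz (X : Type*) [AddCommGroup X] [PartialOrder X] [IsOrderedAddMonoid X] [Module ℝ X]
    [PosSMulStrictMono ℝ X] : Prop :=
  ∀ (A : Set X) (x : X), A.Finite → A.Nonempty →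
    upperBounds ((x + ·) '' A) ⊆ upperBounds A → 0 ≤ x

/-!
Band projections are exactly the additive idempotents `f` with `0 ≤ f x ≤ x` for `0 ≤ x`
(order projections). The pre-Riesz property enters through two facts: the space is directed, and
`b = 0` whenever `s₁ + s₂ = b + t` with `s₁`, `s₂`, `t` all disjoint from `b`. The latter makes a
projection band and its disjoint complement closed under addition, so that every projection band
is the range of an order projection, and it shows that the range of an order projection is a
projection band whose disjoint complement is the kernel. In a directed space two order
projections `f`, `g` commute, because each maps the kernel of the other into itself: kernel
elements are differences of positive kernel elements `t`, and `0 ≤ f (g t) ≤ f t = 0`. Hence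
`f + g - f g` is again an order projection, its complement being `(1 - f) (1 - g)`, and its range
is `range f + range g`.
-/

set_option linter.unusedSectionVars false

lemma mem_upperBounds_pair {α : Type*} [Preorder α] {a b v : α} :
    v ∈ upperBounds ({a, b} : Set α) ↔ a ≤ v ∧ b ≤ v := by
  simp [upperBounds_insert]

lemma nonneg_of_nonneg_add_self {a : X} (h : 0 ≤ a + a) : 0 ≤ a := by
  have : (0 : X) ≤ (1 / 2 : ℝ) • (a + a) := smul_nonneg (by norm_num) h
  rwa [← two_smul ℝ a, smul_smul, one_div, inv_mul_cancel₀ two_ne_zero, one_smul] at this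

namespace UDisjoint

variable {x y : X}

lemma symm (h : UDisjoint x y) : UDisjoint y x := by
  have e : ({y + x, -y - x} : Set X) = {x + y, -x - y} := by
    rw [add_comm, show -y - x = -x - y by abel]
  rw [UDisjoint, e, Set.pair_comm (y - x)]
  exact h

lemma neg_right (h : UDisjoint x y) : UDisjoint x (-y) := by
  have e₁ : ({x + -y, -x - -y} : Set X) = {x - y, y - x} := by
    rw [← sub_eq_add_neg, show -x - -y = y - x by abel]
  have e₂ : ({x - -y, -y - x} : Set X) = {x + y, -x - y} := by
    rw [sub_neg_eq_add, show -y - x = -x - y by abel]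
  rw [UDisjoint, e₁, e₂, h]

lemma neg_left (h : UDisjoint x y) : UDisjoint (-x) y :=
  h.symm.neg_right.symm

lemma zero_right (x : X) : UDisjoint x 0 := by
  simp [UDisjoint]

lemma add_sub_le (h : UDisjoint x y) {t v : X} (h₁ : t + (x + y) ≤ v) (h₂ : t - (x + y) ≤ v) :
    t + (x - y) ≤ v ∧ t + (y - x) ≤ v := by
  have hv : v - t ∈ upperBounds ({x + y, -x - y} : Set X) := by
    rw [mem_upperBounds_pair, le_sub_iff_add_le', le_sub_iff_add_le', ← neg_add', ← sub_eq_add_neg]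
    exact ⟨h₁, h₂⟩
  rwa [h, mem_upperBounds_pair, le_sub_iff_add_le', le_sub_iff_add_le'] at hv

lemma nonneg_of_add_nonneg (h : UDisjoint x y) (hxy : 0 ≤ x + y) : 0 ≤ x ∧ 0 ≤ y := by
  have hb : x + y ∈ upperBounds ({x + y, -x - y} : Set X) := by
    rw [mem_upperBounds_pair, ← neg_add']
    exact ⟨le_rfl, (neg_nonpos.mpr hxy).trans hxy⟩
  rw [h, mem_upperBounds_pair, ← sub_nonneg, ← sub_nonneg (b := y - x)] at hb
  constructor <;> apply nonneg_of_nonneg_add_self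
  · rw [show x + y - (y - x) = x + x by abel] at hb
    exact hb.2
  · rw [show x + y - (x - y) = y + y by abel] at hb
    exact hb.1

end UDisjoint

lemma zero_mem_dComp (S : Set X) : (0 : X) ∈ dComp S :=
  fun s _ => (UDisjoint.zero_right s).symm

lemma neg_mem_dComp {S : Set X} {x : X} (hx : x ∈ dComp S) : -x ∈ dComp S :=
  fun s hs => (hx s hs).neg_left

namespace IsPreRiesz

lemma isDirectedOrder (hX : IsPreRiesz X) : IsDirectedOrder X := by
  refine ⟨fun x y => ?_⟩
  by_contra! hxy
  have hyx : 0 ≤ x - y := by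
    refine hX {y, y + y - x} (x - y) (Set.toFinite _) (Set.insert_nonempty _ _) fun v hv => ?_
    rw [Set.image_pair, show x - y + y = x by abel, show x - y + (y + y - x) = y by abel,
      mem_upperBounds_pair] at hv
    exact absurd hv.2 (hxy v hv.1)
  exact hxy x le_rfl (sub_nonneg.mp hyx)

/- With `a = 2 s₁` and `c = 2 s₂`, the translate `-b + A` is `{0, b, a, b + a, a + c, b + a + c}`;
disjointness from `b` of `t`, `s₁` and `s₂`, in this order, lifts an upper bound of it above
`2 b`, `2 b + a` and `2 b + a + c`, the remaining elements of `A`. -/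
lemma nonpos_of_add_eq_add (hX : IsPreRiesz X) {s₁ s₂ b t : X} (hsum : s₁ + s₂ = b + t)
    (h₁ : UDisjoint s₁ b) (h₂ : UDisjoint s₂ b) (ht : UDisjoint t b) : b ≤ 0 := by
  obtain rfl : t = s₁ + s₂ - b := by rw [hsum]; abel
  refine neg_nonneg.mp <| hX {b, 2 • b, b + 2 • s₁, 2 • b + 2 • s₁, b + 2 • (s₁ + s₂),
    2 • b + 2 • (s₁ + s₂)} (-b) (Set.toFinite _) (Set.insert_nonempty _ _) fun v hv => ?_
  simp only [Set.image_insert_eq, Set.image_singleton, upperBounds_insert,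
    upperBounds_singleton, Set.mem_inter_iff, Set.mem_Ici] at hv
  obtain ⟨k₀, k₀', k₁, k₁', k₂, k₂'⟩ := hv
  have e₁ : 2 • b ≤ v := by
    have := (ht.add_sub_le (t := s₁ + s₂) (v := v) (by convert k₂ using 1; abel)
      (by convert k₀ using 1; abel)).2
    convert this using 1; abel
  have e₂ : 2 • b + 2 • s₁ ≤ v := by
    have := (h₁.neg_right.add_sub_le (t := s₁ + b) (v := v) (by convert k₁ using 1; abel)
      (by convert e₁ using 1; abel)).1
    convert this using 1; abel
  have e₃ : 2 • b + 2 • (s₁ + s₂) ≤ v := by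
    have := (h₂.neg_right.add_sub_le (t := 2 • s₁ + s₂ + b) (v := v)
      (by convert k₂ using 1; abel) (by convert e₂ using 1; abel)).1
    convert this using 1; abel
  simp only [upperBounds_insert, upperBounds_singleton, Set.mem_inter_iff, Set.mem_Ici]
  exact ⟨by convert k₀' using 1; abel, e₁, by convert k₁' using 1; abel, e₂,
    by convert k₂' using 1; abel, e₃⟩

lemma eq_zero_of_add_eq_add (hX : IsPreRiesz X) {s₁ s₂ b t : X} (hsum : s₁ + s₂ = b + t)
    (h₁ : UDisjoint s₁ b) (h₂ : UDisjoint s₂ b) (ht : UDisjoint t b) : b = 0 := by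
  have hneg : -s₁ + -s₂ = -b + -t := by rw [← neg_add, hsum, neg_add]
  exact le_antisymm (hX.nonpos_of_add_eq_add hsum h₁ h₂ ht) <| neg_nonpos.mp <|
    hX.nonpos_of_add_eq_add hneg h₁.neg_left.neg_right h₂.neg_left.neg_right ht.neg_left.neg_right

end IsPreRiesz

lemma AddMonoidHom.add_sub_comp_apply {M : Type*} [AddCommGroup M] (f g : M →+ M) (x : M) :
    (f + g - f.comp g) x = f x + g x - f (g x) :=
  rfl

structure IsOrderProj (f : X →+ X) : Prop where
  idem : ∀ x, f (f x) = f x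
  nonneg : ∀ x, 0 ≤ x → 0 ≤ f x
  le_self : ∀ x, 0 ≤ x → f x ≤ x

namespace IsOrderProj

variable {f g : X →+ X}

lemma monotone (hf : IsOrderProj f) : Monotone f :=
  (monotone_iff_map_nonneg f).2 hf.nonneg

lemma map_sub_self (hf : IsOrderProj f) (x : X) : f (x - f x) = 0 := by
  rw [map_sub, hf.idem, sub_self]

lemma mem_range_iff (hf : IsOrderProj f) {x : X} : x ∈ Set.range f ↔ f x = x :=
  ⟨by rintro ⟨y, rfl⟩; exact hf.idem y, fun hx => ⟨x, hx⟩⟩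

lemma compl (hf : IsOrderProj f) : IsOrderProj (AddMonoidHom.id X - f) where
  idem x := by simp [hf.idem]
  nonneg x hx := by simpa using hf.le_self x hx
  le_self x hx := by simpa using hf.nonneg x hx

lemma exists_nonneg_sub_eq [IsDirectedOrder X] (hf : IsOrderProj f) {z : X} (hz : f z = 0) :
    ∃ u w, f u = 0 ∧ f w = 0 ∧ 0 ≤ u ∧ 0 ≤ w ∧ z = u - w := by
  obtain ⟨v, hzv, hv⟩ := exists_ge_ge z 0
  refine ⟨v - f v, (v - z) - f (v - z), hf.map_sub_self v, hf.map_sub_self (v - z),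
    sub_nonneg.mpr (hf.le_self v hv), sub_nonneg.mpr (hf.le_self _ (sub_nonneg.mpr hzv)), ?_⟩
  rw [map_sub, hz]
  abel

lemma map_map_eq_zero [IsDirectedOrder X] (hf : IsOrderProj f) (hg : IsOrderProj g) {z : X}
    (hz : f z = 0) : f (g z) = 0 := by
  have hpos : ∀ t, f t = 0 → 0 ≤ t → f (g t) = 0 := fun t ht ht₀ =>
    le_antisymm (ht ▸ hf.monotone (hg.le_self t ht₀)) (hf.nonneg _ (hg.nonneg t ht₀))
  obtain ⟨u, w, hu, hw, hu₀, hw₀, rfl⟩ := hf.exists_nonneg_sub_eq hz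
  rw [map_sub, map_sub, hpos u hu hu₀, hpos w hw hw₀, sub_zero]

lemma map_map_eq_self [IsDirectedOrder X] (hf : IsOrderProj f) (hg : IsOrderProj g) {z : X}
    (hz : f z = z) : f (g z) = g z := by
  have := hf.compl.map_map_eq_zero hg (z := z) (by simp [hz])
  rw [AddMonoidHom.sub_apply, AddMonoidHom.id_apply, sub_eq_zero] at this
  exact this.symm

lemma map_comm [IsDirectedOrder X] (hf : IsOrderProj f) (hg : IsOrderProj g) (x : X) :
    f (g x) = g (f x) := by
  have hx : g x = g (f x) + g (x - f x) := by rw [← map_add, add_sub_cancel]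
  rw [hx, map_add, hf.map_map_eq_self hg (hf.idem x),
    hf.map_map_eq_zero hg (hf.map_sub_self x), add_zero]

lemma add_sub_comp [IsDirectedOrder X] (hf : IsOrderProj f) (hg : IsOrderProj g) :
    IsOrderProj (f + g - f.comp g) where
  idem x := by
    simp only [AddMonoidHom.add_sub_comp_apply, map_add, map_sub, hf.idem, hg.idem, hf.map_comm hg]
    abel
  nonneg x hx := by
    have : (f + g - f.comp g) x = g x + f (x - g x) := by
      rw [AddMonoidHom.add_sub_comp_apply, map_sub]; abel
    rw [this]
    exact add_nonneg (hg.nonneg x hx) (hf.nonneg _ (sub_nonneg.mpr (hg.le_self x hx)))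
  le_self x hx := by
    have : x - (f + g - f.comp g) x = (x - g x) - f (x - g x) := by
      rw [AddMonoidHom.add_sub_comp_apply, map_sub]; abel
    rw [← sub_nonneg, this]
    exact sub_nonneg.mpr (hf.le_self _ (sub_nonneg.mpr (hg.le_self x hx)))

lemma range_add_sub_comp [IsDirectedOrder X] (hf : IsOrderProj f) (hg : IsOrderProj g) :
    Set.range (f + g - f.comp g) = Set.range f + Set.range g := by
  ext x
  rw [(hf.add_sub_comp hg).mem_range_iff, Set.mem_add]
  constructor
  · intro hx
    refine ⟨f x, ⟨x, rfl⟩, g (x - f x), ⟨_, rfl⟩, ?_⟩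
    rw [AddMonoidHom.add_sub_comp_apply] at hx
    rwa [map_sub, ← hf.map_comm hg, ← add_sub_assoc]
  · rintro ⟨b, hb, c, hc, rfl⟩
    rw [hf.mem_range_iff] at hb
    rw [hg.mem_range_iff] at hc
    simp only [AddMonoidHom.add_sub_comp_apply, map_add, hb, hc, hf.map_map_eq_self hg hb]
    abel

lemma le_map_of_add_le (hf : IsOrderProj f) {w z v : X} (hw : f w = w) (hz : f z = 0)
    (h : w + z ≤ v) : w ≤ f v ∧ z ≤ v - f v := by
  constructor
  · simpa [hw, hz] using hf.monotone h
  · simpa [hw, hz] using hf.compl.monotone h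

lemma udisjoint_of_map_eq (hf : IsOrderProj f) {w z : X} (hw : f w = w) (hz : f z = 0) :
    UDisjoint w z := by
  have hw' : f (-w) = -w := by rw [map_neg, hw]
  have hz' : f (-z) = 0 := by rw [map_neg, hz, neg_zero]
  have hle : ∀ {a c v : X}, a ≤ f v → c ≤ v - f v → a + c ≤ v := fun ha hc =>
    (add_le_add ha hc).trans_eq (add_sub_cancel _ _)
  ext v
  simp only [mem_upperBounds_pair, sub_eq_add_neg, add_comm z (-w)]
  constructor
  · rintro ⟨h₁, h₂⟩
    obtain ⟨a₁, c₁⟩ := hf.le_map_of_add_le hw hz h₁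
    obtain ⟨a₂, c₂⟩ := hf.le_map_of_add_le hw' hz' h₂
    exact ⟨hle a₁ c₂, hle a₂ c₁⟩
  · rintro ⟨h₁, h₂⟩
    obtain ⟨a₁, c₁⟩ := hf.le_map_of_add_le hw hz' h₁
    obtain ⟨a₂, c₂⟩ := hf.le_map_of_add_le hw' hz h₂
    exact ⟨hle a₁ c₂, hle a₂ c₁⟩

lemma dComp_range (hX : IsPreRiesz X) (hf : IsOrderProj f) :
    dComp (Set.range f) = {x | f x = 0} := by
  ext z
  refine ⟨fun hz => ?_, fun hz w hw => (hf.udisjoint_of_map_eq (hf.mem_range_iff.mp hw) hz).symm⟩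
  have hd : UDisjoint (f z) (z - f z) := hf.udisjoint_of_map_eq (hf.idem z) (hf.map_sub_self z)
  exact hX.eq_zero_of_add_eq_add (s₁ := z) (s₂ := -(z - f z)) (t := 0) (by abel)
    (hz _ ⟨z, rfl⟩) hd.symm.neg_left (UDisjoint.zero_right _).symm

lemma dComp_ker (hX : IsPreRiesz X) (hf : IsOrderProj f) :
    dComp {x | f x = 0} = Set.range f := by
  ext w
  refine ⟨fun hw => ?_, fun hw z hz => hf.udisjoint_of_map_eq (hf.mem_range_iff.mp hw) hz⟩
  have hd : UDisjoint (f w) (w - f w) := hf.udisjoint_of_map_eq (hf.idem w) (hf.map_sub_self w)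
  have h₀ : w - f w = 0 := hX.eq_zero_of_add_eq_add (s₁ := w) (s₂ := -f w) (t := 0) (by abel)
    (hw _ (hf.map_sub_self w)) hd.neg_left (UDisjoint.zero_right _).symm
  exact ⟨w, (sub_eq_zero.mp h₀).symm⟩

lemma isProjBand_range (hX : IsPreRiesz X) (hf : IsOrderProj f) : IsProjBand (Set.range f) := by
  refine ⟨by rw [IsBand, hf.dComp_range hX, hf.dComp_ker hX], ?_, fun x => ?_⟩
  · ext x
    rw [hf.dComp_range hX, Set.mem_inter_iff, hf.mem_range_iff, Set.mem_singleton_iff]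
    exact ⟨fun ⟨h₁, h₂⟩ => h₁ ▸ h₂, by rintro rfl; exact ⟨map_zero f, map_zero f⟩⟩
  · exact ⟨f x, ⟨x, rfl⟩, x - f x, by rw [hf.dComp_range hX]; exact hf.map_sub_self x, by abel⟩

end IsOrderProj

lemma IsBandProj.isOrderProj {P : X →ₗ[ℝ] X} (hP : IsBandProj P) :
    IsOrderProj P.toAddMonoidHom := by
  have hidem : ∀ x, P (P x) = P x := LinearMap.ext_iff.mp hP.1
  have hparts : ∀ x : X, 0 ≤ x → 0 ≤ P x ∧ 0 ≤ x - P x := fun x hx => by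
    have hker : x - P x ∈ dComp (Set.range P) := by
      rw [← hP.2.2]
      simp [hidem]
    exact (hker _ ⟨x, rfl⟩).symm.nonneg_of_add_nonneg (by rwa [add_sub_cancel])
  exact ⟨hidem, fun x hx => (hparts x hx).1, fun x hx => sub_nonneg.mp (hparts x hx).2⟩

lemma IsOrderProj.isBandProj (hX : IsPreRiesz X) {P : X →ₗ[ℝ] X}
    (hP : IsOrderProj P.toAddMonoidHom) : IsBandProj P :=
  ⟨LinearMap.ext hP.idem, hP.isProjBand_range hX, (hP.dComp_range hX).symm⟩

namespace IsProjBand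

variable {B : Set X}

lemma neg_mem (hB : IsProjBand B) {b : X} (hb : b ∈ B) : -b ∈ B := by
  rw [hB.1] at hb ⊢
  exact neg_mem_dComp hb

lemma add_mem_dComp (hX : IsPreRiesz X) (hB : IsProjBand B) {s₁ s₂ : X} (h₁ : s₁ ∈ dComp B)
    (h₂ : s₂ ∈ dComp B) : s₁ + s₂ ∈ dComp B := by
  obtain ⟨b, hb, t, ht, hsum⟩ := hB.2.2 (s₁ + s₂)
  rw [hX.eq_zero_of_add_eq_add hsum (h₁ b hb) (h₂ b hb) (ht b hb), zero_add] at hsum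
  exact hsum ▸ ht

lemma add_mem (hX : IsPreRiesz X) (hB : IsProjBand B) {b₁ b₂ : X} (h₁ : b₁ ∈ B) (h₂ : b₂ ∈ B) :
    b₁ + b₂ ∈ B := by
  obtain ⟨b, hb, t, ht, hsum⟩ := hB.2.2 (b₁ + b₂)
  rw [add_comm b] at hsum
  rw [hX.eq_zero_of_add_eq_add hsum (ht b₁ h₁).symm (ht b₂ h₂).symm (ht b hb).symm,
    zero_add] at hsum
  exact hsum ▸ hb

lemma eq_of_add_eq_add (hX : IsPreRiesz X) (hB : IsProjBand B) {b b' s s' : X} (hb : b ∈ B)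
    (hb' : b' ∈ B) (hs : s ∈ dComp B) (hs' : s' ∈ dComp B) (h : b + s = b' + s') : b = b' := by
  have hmem : b - b' ∈ B ∩ dComp B := by
    refine ⟨by simpa [sub_eq_add_neg] using hB.add_mem hX hb (hB.neg_mem hb'), ?_⟩
    rw [show b - b' = s' + -s by rw [eq_sub_of_add_eq h]; abel]
    exact hB.add_mem_dComp hX hs' (neg_mem_dComp hs)
  rw [hB.2.1] at hmem
  exact sub_eq_zero.mp hmem

lemma exists_isOrderProj (hX : IsPreRiesz X) (hB : IsProjBand B) :
    ∃ f : X →+ X, IsOrderProj f ∧ Set.range f = B := by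
  choose p hp c hc hpc using hB.2.2
  have hp_eq : ∀ {x b s : X}, b ∈ B → s ∈ dComp B → x = b + s → p x = b := fun hb hs hx =>
    hB.eq_of_add_eq_add hX (hp _) hb (hc _) hs ((hpc _).symm.trans hx)
  have hp_self : ∀ {b : X}, b ∈ B → p b = b := fun hb =>
    hp_eq hb (zero_mem_dComp B) (add_zero _).symm
  have hparts : ∀ x : X, 0 ≤ x → 0 ≤ p x ∧ 0 ≤ c x := fun x hx =>
    (hc x _ (hp x)).symm.nonneg_of_add_nonneg (hpc x ▸ hx)
  refine ⟨AddMonoidHom.mk' p fun x y => ?_, ⟨fun x => hp_self (hp x), fun x hx => (hparts x hx).1,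
    fun x hx => ?_⟩, ?_⟩
  · refine hp_eq (hB.add_mem hX (hp x) (hp y)) (hB.add_mem_dComp hX (hc x) (hc y)) ?_
    rw [add_add_add_comm, ← hpc, ← hpc]
  · exact (le_add_of_nonneg_right (hparts x hx).2).trans_eq (hpc x).symm
  · exact Set.Subset.antisymm (Set.range_subset_iff.mpr hp) fun b hb => ⟨b, hp_self hb⟩

end IsProjBand

theorem stmt_6 (hX : IsPreRiesz X) (P Q : X →ₗ[ℝ] X)
    (hP : IsBandProj P) (hQ : IsBandProj Q) :
    IsBandProj (P + Q - P ∘ₗ Q) ∧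
    Set.range ⇑(P + Q - P ∘ₗ Q) = Set.range ⇑P + Set.range ⇑Q ∧
    (∀ B C : Set X, IsProjBand B → IsProjBand C → IsProjBand (B + C)) := by
  have := hX.isDirectedOrder
  have hP' := hP.isOrderProj
  have hQ' := hQ.isOrderProj
  refine ⟨IsOrderProj.isBandProj hX (P := P + Q - P ∘ₗ Q) (hP'.add_sub_comp hQ'),
    hP'.range_add_sub_comp hQ', fun B C hB hC => ?_⟩
  obtain ⟨f, hf, rfl⟩ := hB.exists_isOrderProj hX
  obtain ⟨g, hg, rfl⟩ := hC.exists_isOrderProj hX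
  rw [← hf.range_add_sub_comp hg]
  exact (hf.add_sub_comp hg).isProjBand_range hX
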